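/- Let Q and Q′ be normal coordinates for germs at 0 of real-analytic hypersurfaces M, M′ ⊂ ℂ², both of finite type at 0, with invariants β₀ and β₀′. If there exists a local biholomorphism H : (ℂ²,0) → (ℂ²,0) satisfying the mapping identity for (Q,Q′), then β₀ = β₀′; that is, β₀ is a biholomorphic invariant. -/

import Mathlib

open Filter Topology Matrix

noncomputable section

/-- Complex conjugation as a plain function. -/
def cj : ℂ → ℂ := (starRingEnd ℂ)

/-- Iterated partial derivative `∂_z^i ∂_w^j F (z, w)` of `F : ℂ → ℂ → ℂ`. -/
def pd (F : ℂ → ℂ → ℂ) (i j : ℕ) (z w : ℂ) : ℂ :=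
  deriv^[i] (fun z' => deriv^[j] (F z') w) z

/-- `Q` is a normal-coordinates defining function (near `0`) of a germ of a
real-analytic hypersurface in `ℂ²`. -/
def IsNormalCoord (Q : ℂ → ℂ → ℂ → ℂ) : Prop :=
  AnalyticAt ℂ (fun p : ℂ × ℂ × ℂ => Q p.1 p.2.1 p.2.2) 0 ∧
  (∀ᶠ p : ℂ × ℂ in 𝓝 0, Q p.1 0 p.2 = p.2) ∧
  (∀ᶠ p : ℂ × ℂ in 𝓝 0, Q 0 p.1 p.2 = p.2) ∧
  (∀ᶠ p : ℂ × ℂ × ℂ in 𝓝 0, Q p.1 p.2.1 (cj (Q (cj p.2.1) (cj p.1) (cj p.2.2))) = p.2.2)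

/-- The mapping identity expressing that the germ at `0` of the holomorphic map
`H = (F, G)` (with `H(0) = 0`) sends the hypersurface defined by `Q` into the one
defined by `Q'`. -/
def SendsInto (Q Q' : ℂ → ℂ → ℂ → ℂ) (F G : ℂ → ℂ → ℂ) : Prop :=
  AnalyticAt ℂ (fun p : ℂ × ℂ => F p.1 p.2) 0 ∧
  AnalyticAt ℂ (fun p : ℂ × ℂ => G p.1 p.2) 0 ∧
  F 0 0 = 0 ∧ G 0 0 = 0 ∧
  ∀ᶠ p : ℂ × ℂ × ℂ in 𝓝 0,
    G p.1 (Q p.1 p.2.1 p.2.2) =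
      Q' (F p.1 (Q p.1 p.2.1 p.2.2)) (cj (F (cj p.2.1) (cj p.2.2))) (cj (G (cj p.2.1) (cj p.2.2)))

/-- Determinant of the Jacobian matrix of `H = (F, G)` at `0`. -/
def JacDet (F G : ℂ → ℂ → ℂ) : ℂ :=
  pd F 1 0 0 0 * pd G 0 1 0 0 - pd F 0 1 0 0 * pd G 1 0 0 0

/-- The hypersurface defined by `Q` is not Levi-flat near `0`, i.e. `Q(z,χ,τ) ≢ τ`. -/
def NotLeviFlat (Q : ℂ → ℂ → ℂ → ℂ) : Prop :=
  ¬ ∀ᶠ p : ℂ × ℂ × ℂ in 𝓝 0, Q p.1 p.2.1 p.2.2 = p.2.2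

/-- The hypersurface defined by `Q` is of finite type at `0`, i.e. `Q(z,χ,0) ≢ 0`. -/
def FiniteTypeAt (Q : ℂ → ℂ → ℂ → ℂ) : Prop :=
  ¬ ∀ᶠ p : ℂ × ℂ in 𝓝 0, Q p.1 p.2 0 = 0

/-- `q_{αμ}(χ) = ∂_z^α ∂_τ^μ Q(0, χ, 0)`. -/
def qd (Q : ℂ → ℂ → ℂ → ℂ) (α μ : ℕ) (χ : ℂ) : ℂ :=
  deriv^[α] (fun z => deriv^[μ] (fun τ => Q z χ τ) 0) 0

/-- The hypersurface (germ) defined by `Q` as a subset of `ℂ²`. -/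
def MSet (Q : ℂ → ℂ → ℂ → ℂ) : Set (ℂ × ℂ) := {p | p.2 = Q p.1 (cj p.1) (cj p.2)}


/-- The Taylor coefficient `r_β(χ, τ)` in the expansion `Q(z,χ,τ) = τ + Σ_{β≥1} r_β(χ,τ) z^β`. -/
def rc (Q : ℂ → ℂ → ℂ → ℂ) (β : ℕ) (χ τ : ℂ) : ℂ :=
  deriv^[β] (fun z => Q z χ τ) 0 / (Nat.factorial β : ℂ)

/-- `β₀` is the invariant of the finite type hypersurface defined by `Q`:
`β₀ = min{β ≥ 1 : r_β(·, 0) ≢ 0}`. -/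
def IsBeta0 (Q : ℂ → ℂ → ℂ → ℂ) (β₀ : ℕ) : Prop :=
  1 ≤ β₀ ∧ (¬ ∀ᶠ χ : ℂ in 𝓝 0, rc Q β₀ χ 0 = 0) ∧
  ∀ β : ℕ, 1 ≤ β → β < β₀ → ∀ᶠ χ : ℂ in 𝓝 0, rc Q β χ 0 = 0

/-!
Putting `z = 0`, `τ = 0` in the mapping identity and using the normalisations
`Q(0, χ, τ) = τ`, `Q'(0, χ, τ) = τ` gives `G(z, 0) ≡ 0`, so the Jacobian determinant is
`F_z(0) G_w(0)` and both factors are nonzero.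
Restricting the mapping identity to `τ = 0` and a fixed generic `χ` gives
`G(z, q(z)) = φ(S(z))` with `q = Q(·, χ, 0)`, `S = F(·, q(·))` and `φ = Q'(·, F̄(χ, 0), 0)`.
For all small `χ ≠ 0`, `q` vanishes to order exactly `β₀` at `0`: its Taylor coefficients
`r_β(χ, 0)` vanish for `β < β₀`, and `r_β₀(·, 0)`, analytic and not identically zero, has an
isolated zero at `0`. Likewise `φ` vanishes to order `β₀'`, because `χ ↦ F̄(χ, 0)` has nonzero
derivative at `0`. Since `G(z, w) = G_w(0) w + o(w)`, the left side vanishes to order `β₀`;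
since `S` has a simple zero, the right side vanishes to order `β₀'`.
-/

open Asymptotics

section General

variable {𝕜 E F : Type*} [NontriviallyNormedField 𝕜] [NormedAddCommGroup E] [NormedSpace 𝕜 E]
  [NormedAddCommGroup F] [NormedSpace 𝕜 F]

theorem AnalyticAt.isTheta_pow_sub_of_analyticOrderAt_eq {f : 𝕜 → E} {z₀ : 𝕜} {n : ℕ}
    (hf : AnalyticAt 𝕜 f z₀) (h : analyticOrderAt f z₀ = n) :
    f =Θ[𝓝 z₀] fun z => (z - z₀) ^ n := by
  obtain ⟨g, hg, hg0, hfg⟩ := hf.analyticOrderAt_eq_natCast.mp h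
  have hg1 : g =Θ[𝓝 z₀] fun _ => (1 : 𝕜) :=
    ((isEquivalent_const_iff_tendsto hg0).mpr hg.continuousAt.tendsto).isTheta.trans
      (isTheta_const_const hg0 one_ne_zero)
  simpa using EventuallyEq.trans_isTheta hfg ((isTheta_refl (fun z => (z - z₀) ^ n) _).smul hg1)

theorem le_of_isBigO_pow_sub_pow_sub {z₀ : 𝕜} {m n : ℕ}
    (h : (fun z => (z - z₀) ^ m) =O[𝓝 z₀] fun z => (z - z₀) ^ n) : n ≤ m := by
  by_contra! hlt
  have hsmall : (fun z => (z - z₀) ^ n) =o[𝓝 z₀] fun z => (z - z₀) ^ m :=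
    (isLittleO_pow_pow hlt).comp_tendsto (tendsto_sub_nhds_zero_iff.mpr tendsto_id)
  refine isLittleO_irrefl ?_ (h.trans_isLittleO hsmall)
  have hne : ∀ᶠ z in 𝓝[≠] z₀, (z - z₀) ^ m ≠ 0 :=
    eventually_nhdsWithin_of_forall fun z hz => pow_ne_zero _ (sub_ne_zero.mpr hz)
  exact hne.frequently.filter_mono nhdsWithin_le_nhds

variable {G : Type*} [NormedAddCommGroup G] [NormedSpace 𝕜 G]

theorem HasStrictFDerivAt.isLittleO_sub_apply_snd {f : E × F → G} {L : E × F →L[𝕜] G}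
    (hf : HasStrictFDerivAt f L 0) (h0 : ∀ᶠ x in 𝓝 0, f (x, 0) = 0) :
    (fun p => f p - L (0, p.2)) =o[𝓝 0] fun p => p.2 := by
  have hk : Tendsto (fun p : E × F => (p, (p.1, (0 : F)))) (𝓝 0) (𝓝 (0, 0)) := by
    refine (continuous_id.prodMk (continuous_fst.prodMk continuous_const)).tendsto' _ _ ?_
    simp
  have h := (hasStrictFDerivAt_iff_isLittleO.mp hf).comp_tendsto hk
  have hfst : ∀ᶠ p : E × F in 𝓝 0, f (p.1, 0) = 0 :=
    (continuous_fst.tendsto' (0 : E × F) 0 rfl).eventually h0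
  have hdiff : (fun p : E × F => p - (p.1, 0)) =O[𝓝 0] fun p => p.2 :=
    isBigO_of_le _ fun p => by simp [Prod.norm_def]
  refine (h.congr' ?_ EventuallyEq.rfl).trans_isBigO hdiff
  filter_upwards [hfst] with p hp
  have hsub : p - (p.1, 0) = (0, p.2) := Prod.ext (sub_self _) (sub_zero _)
  simp only [Function.comp_apply, hp, sub_zero, hsub]

theorem AnalyticAt.eventually_analyticAt_slice [CompleteSpace F] {f : 𝕜 × E → F} {x₀ : 𝕜} {y₀ : E}
    (hf : AnalyticAt 𝕜 f (x₀, y₀)) : ∀ᶠ y in 𝓝 y₀, AnalyticAt 𝕜 (fun x => f (x, y)) x₀ := by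
  have hk : Tendsto (fun y => (x₀, y)) (𝓝 y₀) (𝓝 (x₀, y₀)) :=
    (continuous_const.prodMk continuous_id).tendsto y₀
  filter_upwards [hk.eventually hf.eventually_analyticAt] with y hy
  exact hy.comp₂ analyticAt_id analyticAt_const

theorem AnalyticAt.analyticAt_iterate_deriv_slice [CompleteSpace F] {f : 𝕜 × E → F} {p : 𝕜 × E}
    (hf : AnalyticAt 𝕜 f p) (n : ℕ) :
    AnalyticAt 𝕜 (fun q : 𝕜 × E => deriv^[n] (fun x => f (x, q.2)) q.1) p := by
  induction n with
  | zero => simpa using hf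
  | succ n ih =>
    refine (((ContinuousLinearMap.apply 𝕜 F ((1 : 𝕜), (0 : E))).analyticAt _).comp
      ih.fderiv).congr ?_
    filter_upwards [ih.eventually_analyticAt] with q hq
    have hpath : HasDerivAt (fun x : 𝕜 => (x, q.2)) ((1 : 𝕜), (0 : E)) q.1 :=
      (hasDerivAt_id q.1).prodMk (hasDerivAt_const q.1 q.2)
    rw [Function.iterate_succ_apply']
    exact ((hq.differentiableAt.hasFDerivAt.comp_hasDerivAt q.1 hpath).deriv).symm

end General

theorem AnalyticAt.isTheta_comp_prodMk {𝕜 : Type*} [NontriviallyNormedField 𝕜]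
    {G : 𝕜 → 𝕜 → 𝕜} {α : Type*} {l : Filter α} {x q : α → 𝕜}
    (hG : AnalyticAt 𝕜 (fun p : 𝕜 × 𝕜 => G p.1 p.2) 0) (hG0 : ∀ᶠ z in 𝓝 0, G z 0 = 0)
    (hd : deriv (G 0) 0 ≠ 0) (hxq : Tendsto (fun a => (x a, q a)) l (𝓝 0)) :
    (fun a => G (x a) (q a)) =Θ[l] q := by
  set L := fderiv 𝕜 (fun p : 𝕜 × 𝕜 => G p.1 p.2) 0
  have hL : L (0, 1) = deriv (G 0) 0 :=
    (hG.differentiableAt.hasFDerivAt.comp_hasDerivAt (0 : 𝕜)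
      ((hasDerivAt_const (0 : 𝕜) (0 : 𝕜)).prodMk (hasDerivAt_id 0))).deriv.symm
  have hlin : (fun a => G (x a) (q a) - deriv (G 0) 0 * q a) =o[l] q := by
    refine ((hG.hasStrictFDerivAt.isLittleO_sub_apply_snd hG0).comp_tendsto hxq).congr_left
      fun a => ?_
    have hsmul : ((0 : 𝕜), q a) = q a • ((0 : 𝕜), (1 : 𝕜)) := by simp
    show G (x a) (q a) - L (0, q a) = _
    rw [hsmul, map_smul, hL, smul_eq_mul, mul_comm]
  have hdq : (fun a => deriv (G 0) 0 * q a) =Θ[l] q := (isTheta_const_mul_left hd).mpr isTheta_rfl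
  exact (IsEquivalent.isTheta (hlin.trans_isTheta hdq.symm)).trans hdq

theorem tendsto_prodMk_zero_nhds_zero {X Y : Type*} [TopologicalSpace X] [TopologicalSpace Y]
    [Zero X] [Zero Y] : Tendsto (fun x : X => (x, (0 : Y))) (𝓝 0) (𝓝 0) :=
  (continuous_id.prodMk continuous_const).tendsto' _ _ rfl

theorem eventually_analyticOrderAt_slice_eq {𝕜 E : Type*} [NontriviallyNormedField 𝕜]
    [CharZero 𝕜] [NormedAddCommGroup E] [NormedSpace 𝕜 E] [CompleteSpace E]
    {f : 𝕜 × 𝕜 → E} {n : ℕ} (hf : AnalyticAt 𝕜 f 0)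
    (hlt : ∀ k < n, ∀ᶠ y in 𝓝 0, deriv^[k] (fun x => f (x, y)) 0 = 0)
    (hn : ¬ ∀ᶠ y in 𝓝 0, deriv^[n] (fun x => f (x, y)) 0 = 0) :
    ∀ᶠ y in 𝓝[≠] 0, analyticOrderAt (fun x => f (x, y)) 0 = n := by
  have hD : AnalyticAt 𝕜 (fun y => deriv^[n] (fun x => f (x, y)) 0) 0 :=
    (hf.analyticAt_iterate_deriv_slice n).comp_of_eq (analyticAt_const.prod analyticAt_id) rfl
  have hzero : ∀ᶠ y in 𝓝 0, ∀ k < n, deriv^[k] (fun x => f (x, y)) 0 = 0 :=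
    (eventually_all_finite (Set.finite_Iio n)).mpr hlt
  filter_upwards [hD.eventually_eq_zero_or_eventually_ne_zero.resolve_left hn,
    (hzero.and hf.eventually_analyticAt_slice).filter_mono nhdsWithin_le_nhds]
    with y hy ⟨hz, ha⟩
  rw [analyticOrderAt_eq_nat_iff_iteratedDeriv_eq_zero ha]
  simp only [iteratedDeriv_eq_iterate]
  exact ⟨hz, hy⟩

theorem eq_of_eventually_comp_eq {𝕜 : Type*} [NontriviallyNormedField 𝕜] [CharZero 𝕜]
    [CompleteSpace 𝕜] {G : 𝕜 → 𝕜 → 𝕜} {q S φ : 𝕜 → 𝕜} {m n : ℕ}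
    (hG : AnalyticAt 𝕜 (fun p : 𝕜 × 𝕜 => G p.1 p.2) 0) (hG0 : ∀ᶠ z in 𝓝 0, G z 0 = 0)
    (hd : deriv (G 0) 0 ≠ 0) (hq : analyticOrderAt q 0 = m) (hm : m ≠ 0)
    (hS : analyticOrderAt S 0 = 1) (hφ : analyticOrderAt φ 0 = n)
    (h : ∀ᶠ z in 𝓝 0, G z (q z) = φ (S z)) : m = n := by
  obtain ⟨hqa, hq0⟩ := analyticOrderAt_ne_zero.mp (hq ▸ Nat.cast_ne_zero.mpr hm)
  obtain ⟨hSa, hS0⟩ := analyticOrderAt_ne_zero.mp (hS ▸ one_ne_zero)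
  have hcurve : Tendsto (fun z => (z, q z)) (𝓝 0) (𝓝 0) := by
    have := (continuousAt_id.prodMk hqa.continuousAt).tendsto
    rwa [id, hq0, Prod.mk_zero_zero] at this
  have h' : (fun z => G z (q z)) =ᶠ[𝓝 0] φ ∘ S := h
  have hφSa : AnalyticAt 𝕜 (φ ∘ S) 0 :=
    (hG.comp_of_eq (analyticAt_id.prod hqa) (by simp [hq0])).congr h'
  have hφS : analyticOrderAt (φ ∘ S) 0 = n := by
    have hS' : deriv S 0 ≠ 0 := by
      simpa using ((analyticOrderAt_eq_nat_iff_iteratedDeriv_eq_zero hSa).mp hS).2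
    rw [analyticOrderAt_comp_of_deriv_ne_zero hSa hS', hS0, hφ]
  have hpow : (fun z : 𝕜 => (z - 0) ^ m) =Θ[𝓝 0] fun z => (z - 0) ^ n :=
    (hqa.isTheta_pow_sub_of_analyticOrderAt_eq hq).symm.trans
      ((hG.isTheta_comp_prodMk hG0 hd hcurve).symm.trans
        (h'.isTheta.trans (hφSa.isTheta_pow_sub_of_analyticOrderAt_eq hφS)))
  exact le_antisymm (le_of_isBigO_pow_sub_pow_sub hpow.2) (le_of_isBigO_pow_sub_pow_sub hpow.1)

theorem cj_zero : cj 0 = 0 := map_zero _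

theorem tendsto_cj_zero : Tendsto cj (𝓝 0) (𝓝 0) :=
  Complex.continuous_conj.tendsto' 0 0 cj_zero

theorem rc_eq_zero_iff {Q : ℂ → ℂ → ℂ → ℂ} {β : ℕ} {χ τ : ℂ} :
    rc Q β χ τ = 0 ↔ deriv^[β] (fun z => Q z χ τ) 0 = 0 := by
  simp [rc, Nat.factorial_ne_zero]

theorem IsBeta0.eventually_analyticOrderAt_eq {Q : ℂ → ℂ → ℂ → ℂ} {β₀ : ℕ} (hB : IsBeta0 Q β₀)
    (hQ : AnalyticAt ℂ (fun p : ℂ × ℂ × ℂ => Q p.1 p.2.1 p.2.2) 0)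
    (hQ0 : ∀ᶠ p : ℂ × ℂ in 𝓝 0, Q 0 p.1 p.2 = p.2) :
    ∀ᶠ χ in 𝓝[≠] 0, analyticOrderAt (fun z => Q z χ 0) 0 = β₀ := by
  obtain ⟨-, hne, hlt⟩ := hB
  refine eventually_analyticOrderAt_slice_eq (f := fun p => Q p.1 p.2 0)
    (hQ.comp_of_eq (analyticAt_fst.prod (analyticAt_snd.prod analyticAt_const)) rfl)
    (fun k hk => ?_) (by simpa only [rc_eq_zero_iff] using hne)
  rcases Nat.eq_zero_or_pos k with rfl | hk0
  · exact tendsto_prodMk_zero_nhds_zero.eventually hQ0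
  · simpa only [rc_eq_zero_iff] using hlt k hk0 hk

theorem tendsto_conj_slice {H : ℂ → ℂ → ℂ}
    (hH : ContinuousAt (fun p : ℂ × ℂ => H p.1 p.2) 0) (hH0 : H 0 0 = 0) :
    Tendsto (fun χ => cj (H (cj χ) 0)) (𝓝 0) (𝓝 0) := by
  have h1 : Tendsto (fun χ : ℂ => (cj χ, (0 : ℂ))) (𝓝 0) (𝓝 0) := by
    rw [← Prod.mk_zero_zero]
    exact tendsto_cj_zero.prodMk_nhds tendsto_const_nhds
  have h2 : Tendsto (fun p : ℂ × ℂ => H p.1 p.2) (𝓝 0) (𝓝 0) := by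
    simpa [hH0] using hH.tendsto
  exact tendsto_cj_zero.comp (h2.comp h1)

theorem SendsInto.eventually_eventually_slice {Q Q' : ℂ → ℂ → ℂ → ℂ} {F G : ℂ → ℂ → ℂ}
    (h : SendsInto Q Q' F G) :
    ∀ᶠ χ in 𝓝 0, ∀ᶠ z in 𝓝 0,
      G z (Q z χ 0) = Q' (F z (Q z χ 0)) (cj (F (cj χ) 0)) (cj (G (cj χ) 0)) := by
  have hk : Tendsto (fun χ : ℂ => ((0 : ℂ), χ, (0 : ℂ))) (𝓝 0) (𝓝 0) :=
    (continuous_const.prodMk (continuous_id.prodMk continuous_const)).tendsto' _ _ rfl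
  filter_upwards [hk.eventually (eventually_eventually_nhds.mpr h.2.2.2.2)] with χ hχ
  have hz : Tendsto (fun z : ℂ => (z, χ, (0 : ℂ))) (𝓝 0) (𝓝 (0, χ, 0)) :=
    (continuous_id.prodMk continuous_const).tendsto 0
  filter_upwards [hz.eventually hχ] with z hz
  simpa only [cj_zero] using hz

theorem SendsInto.eventually_snd_eq_zero {Q Q' : ℂ → ℂ → ℂ → ℂ} {F G : ℂ → ℂ → ℂ}
    (h : SendsInto Q Q' F G) (hQ0 : ∀ᶠ p : ℂ × ℂ in 𝓝 0, Q 0 p.1 p.2 = p.2)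
    (hQ'0 : ∀ᶠ p : ℂ × ℂ in 𝓝 0, Q' 0 p.1 p.2 = p.2) : ∀ᶠ z in 𝓝 0, G z 0 = 0 := by
  have hid := h.eventually_eventually_slice
  obtain ⟨hF, hG, hF0, hG0, -⟩ := h
  have hu : ∀ᶠ χ in 𝓝 0, cj (G (cj χ) 0) = 0 := by
    filter_upwards [hid, tendsto_prodMk_zero_nhds_zero.eventually hQ0,
      ((tendsto_conj_slice hF.continuousAt hF0).prodMk_nhds
        (tendsto_conj_slice hG.continuousAt hG0)).eventually hQ'0] with χ hχ hQχ hQ'χ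
    have h0 := hχ.self_of_nhds
    rw [hQχ, hG0, hF0] at h0
    exact (h0.trans hQ'χ).symm
  filter_upwards [tendsto_cj_zero.eventually hu] with z hz
  simpa [cj] using hz

theorem jacDet_eq_mul_of_eventually_eq_zero {F G : ℂ → ℂ → ℂ} (hG0 : ∀ᶠ z in 𝓝 0, G z 0 = 0) :
    JacDet F G = deriv (fun z => F z 0) 0 * deriv (G 0) 0 := by
  have hG0' : (fun z => G z 0) =ᶠ[𝓝 0] fun _ => 0 := hG0
  have hGz : deriv (fun z => G z 0) 0 = 0 := by rw [hG0'.deriv_eq, deriv_const]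
  simp [JacDet, pd, hGz]

theorem tendsto_conj_slice_nhdsNE {F : ℂ → ℂ → ℂ}
    (hF : AnalyticAt ℂ (fun p : ℂ × ℂ => F p.1 p.2) 0) (hF0 : F 0 0 = 0)
    (ha : deriv (fun z => F z 0) 0 ≠ 0) :
    Tendsto (fun χ => cj (F (cj χ) 0)) (𝓝[≠] 0) (𝓝[≠] 0) := by
  have hslice : AnalyticAt ℂ (fun z => F z 0) 0 :=
    hF.comp_of_eq (analyticAt_id.prod analyticAt_const) rfl
  have := hslice.differentiableAt.hasDerivAt.conj_conj.tendsto_nhdsNE ((map_ne_zero _).mpr ha)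
  simpa [hF0, Function.comp_def, cj] using this

theorem eventually_analyticOrderAt_comp_slice_eq_one {F : ℂ → ℂ → ℂ} {Q : ℂ → ℂ → ℂ → ℂ}
    (hF : AnalyticAt ℂ (fun p : ℂ × ℂ => F p.1 p.2) 0) (hF0 : F 0 0 = 0)
    (ha : deriv (fun z => F z 0) 0 ≠ 0)
    (hQ : AnalyticAt ℂ (fun p : ℂ × ℂ × ℂ => Q p.1 p.2.1 p.2.2) 0)
    (hQz : ∀ᶠ p : ℂ × ℂ in 𝓝 0, Q p.1 0 p.2 = p.2) (hQχ : ∀ᶠ p : ℂ × ℂ in 𝓝 0, Q 0 p.1 p.2 = p.2) :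
    ∀ᶠ χ in 𝓝 0, analyticOrderAt (fun z => F z (Q z χ 0)) 0 = 1 := by
  have hQ0 : ∀ᶠ χ in 𝓝 0, Q 0 χ 0 = 0 := tendsto_prodMk_zero_nhds_zero.eventually hQχ
  have hS : AnalyticAt ℂ (fun p : ℂ × ℂ => F p.1 (Q p.1 p.2 0)) 0 :=
    hF.comp_of_eq (analyticAt_fst.prod (hQ.comp_of_eq
      (analyticAt_fst.prod (analyticAt_snd.prod analyticAt_const)) rfl))
      (by simp [hQ0.self_of_nhds])
  have hS' : deriv (fun z => F z (Q z 0 0)) 0 ≠ 0 := by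
    have hQ00 : (fun z => F z (Q z 0 0)) =ᶠ[𝓝 0] fun z => F z 0 := by
      filter_upwards [tendsto_prodMk_zero_nhds_zero.eventually hQz] with z hz
      rw [hz]
    rwa [hQ00.deriv_eq]
  have hderiv := ((hS.analyticAt_iterate_deriv_slice 1).comp_of_eq
    (analyticAt_const.prod analyticAt_id) rfl).continuousAt.eventually_ne hS'
  filter_upwards [hS.eventually_analyticAt_slice, hQ0, hderiv] with χ hSa hχ hSd
  exact hSa.analyticOrderAt_eq_one_of_zero_deriv_ne_zero (by simp [hχ, hF0]) hSd

theorem beta0_is_biholomorphic_invariant_general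
    (Q Q' : ℂ → ℂ → ℂ → ℂ) (hQ : IsNormalCoord Q) (hQ' : IsNormalCoord Q')
    (β₀ β₀' : ℕ) (hB : IsBeta0 Q β₀) (hB' : IsBeta0 Q' β₀')
    (F G : ℂ → ℂ → ℂ) (h : SendsInto Q Q' F G) (hb : JacDet F G ≠ 0) :
    β₀ = β₀' := by
  obtain ⟨hQa, hQz, hQχ, -⟩ := hQ
  obtain ⟨hQ'a, -, hQ'χ, -⟩ := hQ'
  have hG0 := h.eventually_snd_eq_zero hQχ hQ'χ
  rw [jacDet_eq_mul_of_eventually_eq_zero hG0] at hb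
  obtain ⟨ha, hd⟩ := mul_ne_zero_iff.mp hb
  have hu : ∀ᶠ χ in 𝓝 0, cj (G (cj χ) 0) = 0 := by
    filter_upwards [tendsto_cj_zero.eventually hG0] with χ hχ
    rw [hχ, cj_zero]
  have hq := hB.eventually_analyticOrderAt_eq hQa hQχ
  have hφ := (tendsto_conj_slice_nhdsNE h.1 h.2.2.1 ha).eventually
    (hB'.eventually_analyticOrderAt_eq hQ'a hQ'χ)
  have hS := eventually_analyticOrderAt_comp_slice_eq_one h.1 h.2.2.1 ha hQa hQz hQχ
  obtain ⟨χ, hqχ, hφχ, hidχ, huχ, hSχ⟩ := (hq.and (hφ.and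
    ((h.eventually_eventually_slice.and (hu.and hS)).filter_mono nhdsWithin_le_nhds))).exists
  refine eq_of_eventually_comp_eq h.2.1 hG0 hd hqχ (Nat.one_le_iff_ne_zero.mp hB.1) hSχ hφχ ?_
  filter_upwards [hidχ] with z hz
  rwa [huχ] at hz

/-- `β₀` is a biholomorphic invariant: if some local biholomorphism
sends `M` into `M'` (both of finite type at `0`), then `β₀ = β₀'`. -/
theorem beta0_is_biholomorphic_invariant
    (Q Q' : ℂ → ℂ → ℂ → ℂ) (hQ : IsNormalCoord Q) (hQ' : IsNormalCoord Q')
    (hFT : FiniteTypeAt Q) (hFT' : FiniteTypeAt Q')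
    (β₀ β₀' : ℕ) (hB : IsBeta0 Q β₀) (hB' : IsBeta0 Q' β₀')
    (F G : ℂ → ℂ → ℂ) (h : SendsInto Q Q' F G) (hb : JacDet F G ≠ 0) :
    β₀ = β₀' :=
  beta0_is_biholomorphic_invariant_general Q Q' hQ hQ' β₀ β₀' hB hB' F G h hb
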